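/- arXiv:2007.00102 — 2 statements merged into one kernel-verified Lean document; each statement's English description precedes it below -/
import Mathlib

section
/- For any POMDP with value function V on beliefs (the supremum over all policies of the probability to reach the bad beliefs in the belief MDP), V is convex: for all beliefs b₁, b₂ supported on states with the same observation and all α ∈ [0,1], V(α·b₁ + (1−α)·b₂) ≤ α·V(b₁) + (1−α)·V(b₂). -/
/-!
Value iteration preserves convexity on the simplex of sub-probability vectors. For a fixed
action `a` and observation `z`, the map `b ↦ P(b,a,z) ⟦b|a,z⟧` is linear, so
`b ↦ P(b,a,z) · f ⟦b|a,z⟧` is the perspective of `f` composed with a linear map and is convex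
whenever `f` is. Sums and bounded suprema of convex functions are convex, and the bad beliefs
form a face of the simplex on which the value takes its maximum `1`, so resetting the value to
`1` there keeps it convex. The value is the supremum of the iterates.

Sub-probability vectors are used instead of distributions so that the junk update
`⟦b|a,z⟧ = 0` at `P(b,a,z) = 0` stays in the domain.
-/

open BigOperators
open scoped Classical

/-- A POMDP: an MDP with finite state, action and observation spaces,
    a transition function `P` with `∑ s', P s a s' ∈ {0,1}`,
    an observation function `O` and an initial state. -/
structure POMDP (S A Z : Type) [Fintype S] [Fintype A] [Fintype Z] where
  P : S → A → S → ℝ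
  P_nonneg : ∀ s a s', 0 ≤ P s a s'
  P_sum : ∀ s a, (∑ s', P s a s') = 0 ∨ (∑ s', P s a s') = 1
  O : S → Z
  init : S

variable {S A Z : Type} [Fintype S] [Fintype A] [Fintype Z]

/-- A probability distribution over the (finite) state space. -/
def IsDist (b : S → ℝ) : Prop := (∀ s, 0 ≤ b s) ∧ ∑ s, b s = 1

/-- A belief: a distribution whose support is contained in one observation class. -/
def IsBelief (M : POMDP S A Z) (b : S → ℝ) : Prop :=
  IsDist b ∧ ∀ s s', b s ≠ 0 → b s' ≠ 0 → M.O s = M.O s'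

/-- The Dirac distribution on a state. -/
noncomputable def dirac (s : S) : S → ℝ := fun t => if t = s then 1 else 0

/-- `P(b,α,z)`: the probability of observing `z` after taking `α` in belief `b`. -/
noncomputable def obsProb (M : POMDP S A Z) (b : S → ℝ) (a : A) (z : Z) : ℝ :=
  ∑ s, b s * ∑ s', (if M.O s' = z then M.P s a s' else 0)

/-- `⟦b|α,z⟧`: the Bayesian belief update after taking `α` and observing `z`. -/
noncomputable def beliefUpdate (M : POMDP S A Z) (b : S → ℝ) (a : A) (z : Z) : S → ℝ :=
  fun s' => (if M.O s' = z then ∑ s, b s * M.P s a s' else 0) / obsProb M b a z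

/-- Bad beliefs: beliefs assigning total probability 1 to the bad states. -/
def IsBadBelief (Bad : Finset S) (b : S → ℝ) : Prop := ∑ s ∈ Bad, b s = 1

/-- Transition probabilities of the belief MDP. -/
noncomputable def beliefTrans (M : POMDP S A Z) (b : S → ℝ) (a : A) (b' : S → ℝ) : ℝ :=
  ∑ z, if b' = beliefUpdate M b a z ∧ 0 < obsProb M b a z then obsProb M b a z else 0

/-- `n`-step value iteration for reaching the bad beliefs in the belief MDP. -/
noncomputable def valN (M : POMDP S A Z) (Bad : Finset S) : ℕ → (S → ℝ) → ℝ
  | 0, b => if IsBadBelief Bad b then 1 else 0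
  | n+1, b =>
      if IsBadBelief Bad b then 1
      else ⨆ a : A, ∑ z, obsProb M b a z * valN M Bad n (beliefUpdate M b a z)

/-- The value of a belief: the optimal probability of reaching the bad beliefs
    in the belief MDP (limit of value iteration). -/
noncomputable def beliefVal (M : POMDP S A Z) (Bad : Finset S) (b : S → ℝ) : ℝ :=
  ⨆ n, valN M Bad n b

section Convexity

variable {𝕜 E : Type*} [Field 𝕜] [LinearOrder 𝕜] [IsStrictOrderedRing 𝕜]
  [AddCommGroup E] [Module 𝕜 E]

theorem ConvexOn.sum {ι : Type*} {s : Set E} {f : ι → E → 𝕜} (t : Finset ι)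
    (hs : Convex 𝕜 s) (hf : ∀ i ∈ t, ConvexOn 𝕜 s (f i)) :
    ConvexOn 𝕜 s (fun x => ∑ i ∈ t, f i x) := by
  induction t using Finset.induction_on with
  | empty => simpa using convexOn_const (0 : 𝕜) hs
  | insert i t hi ih =>
    simp_rw [Finset.sum_insert hi]
    exact (hf i (t.mem_insert_self i)).add (ih fun j hj => hf j (Finset.mem_insert_of_mem hj))

theorem isExtreme_setOf_eq_of_le {s : Set E} (ℓ : E →ₗ[𝕜] 𝕜) {c : 𝕜}
    (hℓ : ∀ x ∈ s, ℓ x ≤ c) : IsExtreme 𝕜 s {x ∈ s | ℓ x = c} := by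
  refine ⟨Set.sep_subset _ _, fun x hx y hy z hz ⟨a, b, ha, hb, hab, hxyz⟩ => ⟨hx, ?_⟩⟩
  have hz' : a * ℓ x + b * ℓ y = c := by simpa [← hxyz] using hz.2
  by_contra hne
  have hlt : ℓ x < c := lt_of_le_of_ne (hℓ x hx) hne
  have hc : c = a * c + b * c := by rw [← add_mul, hab, one_mul]
  linarith [mul_lt_mul_of_pos_left hlt ha, mul_le_mul_of_nonneg_left (hℓ y hy) hb.le]

theorem ConvexOn.ite_of_isExtreme {s : Set E} {p : E → Prop} {g : E → 𝕜} {c : 𝕜}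
    (hg : ConvexOn 𝕜 s g) (hp : IsExtreme 𝕜 s {x ∈ s | p x}) (hgc : ∀ x ∈ s, g x ≤ c) :
    ConvexOn 𝕜 s (fun x => if p x then c else g x) := by
  refine ⟨hg.1, fun x hx y hy a b ha hb hab => ?_⟩
  have hle : ∀ w ∈ s, g w ≤ if p w then c else g w := fun w hw => by
    split_ifs
    exacts [hgc w hw, le_rfl]
  rcases ha.eq_or_lt with rfl | ha'
  · simp [(zero_add b).symm.trans hab]
  rcases hb.eq_or_lt with rfl | hb'
  · simp [(add_zero a).symm.trans hab]
  simp only [smul_eq_mul]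
  by_cases hmix : p (a • x + b • y)
  · have hseg : a • x + b • y ∈ openSegment 𝕜 x y := ⟨a, b, ha', hb', hab, rfl⟩
    have hpx := (hp.left_mem_of_mem_openSegment hx hy ⟨hg.1 hx hy ha hb hab, hmix⟩ hseg).2
    have hpy := (hp.right_mem_of_mem_openSegment hx hy ⟨hg.1 hx hy ha hb hab, hmix⟩ hseg).2
    simp [hmix, hpx, hpy, ← add_mul, hab]
  · rw [if_neg hmix]
    calc g (a • x + b • y) ≤ a * g x + b * g y := hg.2 hx hy ha hb hab
      _ ≤ _ := by gcongr <;> exact hle _ ‹_›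

theorem ConvexOn.perspective {s K : Set E} {f : E → 𝕜} (hf : ConvexOn 𝕜 s f)
    (hK : Convex 𝕜 K) (σ : E →ₗ[𝕜] 𝕜) (hσ : ∀ y ∈ K, 0 ≤ σ y)
    (hσ0 : ∀ y ∈ K, σ y = 0 → y = 0) (hs : ∀ y ∈ K, (σ y)⁻¹ • y ∈ s) :
    ConvexOn 𝕜 K (fun y => σ y * f ((σ y)⁻¹ • y)) := by
  refine ⟨hK, fun y₁ hy₁ y₂ hy₂ a b ha hb hab => ?_⟩
  have hrescale : ∀ y ∈ K, σ y • (σ y)⁻¹ • y = y := fun y hy => by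
    rcases eq_or_ne (σ y) 0 with h | h
    · simp [hσ0 y hy h]
    · rw [smul_smul, mul_inv_cancel₀ h, one_smul]
  set t₁ := σ y₁
  set t₂ := σ y₂
  have ht : σ (a • y₁ + b • y₂) = a * t₁ + b * t₂ := by simp [t₁, t₂]
  have h₁ : 0 ≤ a * t₁ := mul_nonneg ha (hσ y₁ hy₁)
  have h₂ : 0 ≤ b * t₂ := mul_nonneg hb (hσ y₂ hy₂)
  simp only [smul_eq_mul, ht]
  rcases (add_nonneg h₁ h₂).eq_or_lt with h0 | hpos
  · obtain ⟨h₁0, h₂0⟩ := (add_eq_zero_iff_of_nonneg h₁ h₂).1 h0.symm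
    rw [← mul_assoc, ← mul_assoc, h₁0, h₂0]
    simp
  set t := a * t₁ + b * t₂
  have hmix : t⁻¹ • (a • y₁ + b • y₂)
      = (a * t₁ / t) • ((t₁)⁻¹ • y₁) + (b * t₂ / t) • ((t₂)⁻¹ • y₂) := by
    conv_lhs => rw [← hrescale y₁ hy₁, ← hrescale y₂ hy₂]
    simp only [smul_add, smul_smul]
    congr 2 <;> ring
  have hw : a * t₁ / t + b * t₂ / t = 1 := by rw [← add_div, div_self hpos.ne']
  have key := hf.2 (hs y₁ hy₁) (hs y₂ hy₂) (div_nonneg h₁ hpos.le) (div_nonneg h₂ hpos.le) hw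
  rw [← hmix, smul_eq_mul, smul_eq_mul] at key
  calc t * f (t⁻¹ • (a • y₁ + b • y₂))
      ≤ t * (a * t₁ / t * f (t₁⁻¹ • y₁) + b * t₂ / t * f (t₂⁻¹ • y₂)) := by gcongr
    _ = a * (t₁ * f (t₁⁻¹ • y₁)) + b * (t₂ * f (t₂⁻¹ • y₂)) := by field_simp

end Convexity

theorem ConvexOn.ciSup {E ι : Type*} [AddCommGroup E] [Module ℝ E] {s : Set E}
    {f : ι → E → ℝ} (hs : Convex ℝ s) (hf : ∀ i, ConvexOn ℝ s (f i))
    (hbdd : ∀ x ∈ s, BddAbove (Set.range fun i => f i x)) :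
    ConvexOn ℝ s (fun x => ⨆ i, f i x) := by
  rcases isEmpty_or_nonempty ι with hι | hι
  · simpa [Real.iSup_of_isEmpty] using convexOn_const (0 : ℝ) hs
  refine ⟨hs, fun x hx y hy a b ha hb hab => ?_⟩
  beta_reduce
  refine ciSup_le fun i => ?_
  calc f i (a • x + b • y) ≤ a • f i x + b • f i y := (hf i).2 hx hy ha hb hab
    _ ≤ a • (⨆ i, f i x) + b • ⨆ i, f i y := by
      gcongr
      exacts [le_ciSup (hbdd x hx) i, le_ciSup (hbdd y hy) i]

section Simplex

variable (ι : Type*) [Fintype ι]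

def subStdSimplex : Set (ι → ℝ) :=
  {x | (∀ i, 0 ≤ x i) ∧ ∑ i, x i ≤ 1}

def totalMass : (ι → ℝ) →ₗ[ℝ] ℝ where
  toFun y := ∑ i, y i
  map_add' _ _ := Finset.sum_add_distrib
  map_smul' _ _ := (Finset.mul_sum _ _ _).symm

variable {ι}

theorem convex_subStdSimplex : Convex ℝ (subStdSimplex ι) := by
  refine fun x hx y hy a b ha hb hab => ⟨fun i => ?_, ?_⟩
  · simpa using add_nonneg (mul_nonneg ha (hx.1 i)) (mul_nonneg hb (hy.1 i))
  · simp only [Pi.add_apply, Pi.smul_apply, smul_eq_mul, Finset.sum_add_distrib,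
      ← Finset.mul_sum]
    nlinarith [hx.2, hy.2]

theorem totalMass_apply (y : ι → ℝ) : totalMass ι y = ∑ i, y i := rfl

theorem inv_totalMass_smul_mem_subStdSimplex {y : ι → ℝ} (hy : 0 ≤ y) :
    (totalMass ι y)⁻¹ • y ∈ subStdSimplex ι := by
  refine ⟨fun i => mul_nonneg (inv_nonneg.2 (Finset.sum_nonneg fun j _ => hy j)) (hy i), ?_⟩
  simp only [Pi.smul_apply, smul_eq_mul, ← Finset.mul_sum, ← totalMass_apply]
  exact inv_mul_le_one

theorem ConvexOn.perspective_totalMass {f : (ι → ℝ) → ℝ} (hf : ConvexOn ℝ (subStdSimplex ι) f) :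
    ConvexOn ℝ (Set.Ici 0) (fun y => totalMass ι y * f ((totalMass ι y)⁻¹ • y)) :=
  hf.perspective (convex_Ici 0) (totalMass ι) (fun _ hy => Finset.sum_nonneg fun i _ => hy i)
    (fun _ hy h =>
      funext ((Finset.sum_eq_zero_iff_of_nonneg fun i _ => hy i).1 h · (Finset.mem_univ _)))
    (fun _ hy => inv_totalMass_smul_mem_subStdSimplex hy)

end Simplex

section BeliefMDP

noncomputable def jointProb (M : POMDP S A Z) (a : A) (z : Z) : (S → ℝ) →ₗ[ℝ] (S → ℝ) where
  toFun b s' := if M.O s' = z then ∑ s, b s * M.P s a s' else 0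
  map_add' b c := by
    ext s'
    split_ifs <;> simp [*, add_mul, Finset.sum_add_distrib]
  map_smul' r b := by
    ext s'
    split_ifs <;> simp [*, Finset.mul_sum, mul_assoc]

theorem jointProb_nonneg (M : POMDP S A Z) {b : S → ℝ} (hb : 0 ≤ b) (a : A) (z : Z) :
    0 ≤ jointProb M a z b := fun s' => by
  change 0 ≤ ite _ _ _
  split_ifs
  exacts [Finset.sum_nonneg fun s _ => mul_nonneg (hb s) (M.P_nonneg s a s'), le_rfl]

theorem obsProb_eq_totalMass (M : POMDP S A Z) (b : S → ℝ) (a : A) (z : Z) :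
    obsProb M b a z = totalMass S (jointProb M a z b) := by
  simp only [obsProb, totalMass_apply, jointProb, LinearMap.coe_mk, AddHom.coe_mk,
    Finset.mul_sum, mul_ite, mul_zero]
  rw [Finset.sum_comm]
  refine Finset.sum_congr rfl fun s' _ => ?_
  split_ifs <;> simp

theorem beliefUpdate_eq_smul (M : POMDP S A Z) (b : S → ℝ) (a : A) (z : Z) :
    beliefUpdate M b a z = (obsProb M b a z)⁻¹ • jointProb M a z b := by
  ext s'
  simp [beliefUpdate, jointProb, div_eq_inv_mul]

theorem beliefUpdate_mem_subStdSimplex (M : POMDP S A Z) {b : S → ℝ} (hb : 0 ≤ b)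
    (a : A) (z : Z) : beliefUpdate M b a z ∈ subStdSimplex S := by
  rw [beliefUpdate_eq_smul, obsProb_eq_totalMass]
  exact inv_totalMass_smul_mem_subStdSimplex (jointProb_nonneg M hb a z)

theorem obsProb_nonneg (M : POMDP S A Z) {b : S → ℝ} (hb : 0 ≤ b) (a : A) (z : Z) :
    0 ≤ obsProb M b a z := by
  rw [obsProb_eq_totalMass]
  exact Finset.sum_nonneg fun s' _ => jointProb_nonneg M hb a z s'

theorem sum_obsProb_le (M : POMDP S A Z) {b : S → ℝ} (hb : 0 ≤ b) (a : A) :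
    ∑ z, obsProb M b a z ≤ ∑ s, b s := by
  have hP : ∀ s, ∑ s', M.P s a s' ≤ 1 := fun s => by rcases M.P_sum s a with h | h <;> simp [h]
  calc ∑ z, obsProb M b a z = ∑ s, b s * ∑ s', M.P s a s' := by
        simp only [obsProb]
        rw [Finset.sum_comm]
        refine Finset.sum_congr rfl fun s _ => ?_
        rw [← Finset.mul_sum, Finset.sum_comm]
        simp
    _ ≤ ∑ s, b s := Finset.sum_le_sum fun s _ => mul_le_of_le_one_right (hb s) (hP s)

theorem sum_obsProb_mul_le_one (M : POMDP S A Z) {f : (S → ℝ) → ℝ}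
    (hf : ∀ x ∈ subStdSimplex S, f x ≤ 1) {b : S → ℝ} (hb : b ∈ subStdSimplex S) (a : A) :
    ∑ z, obsProb M b a z * f (beliefUpdate M b a z) ≤ 1 :=
  calc ∑ z, obsProb M b a z * f (beliefUpdate M b a z) ≤ ∑ z, obsProb M b a z :=
        Finset.sum_le_sum fun z _ => mul_le_of_le_one_right (obsProb_nonneg M hb.1 a z)
          (hf _ (beliefUpdate_mem_subStdSimplex M hb.1 a z))
    _ ≤ ∑ s, b s := sum_obsProb_le M hb.1 a
    _ ≤ 1 := hb.2

theorem ConvexOn.obsProb_mul_comp_beliefUpdate (M : POMDP S A Z) {f : (S → ℝ) → ℝ}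
    (hf : ConvexOn ℝ (subStdSimplex S) f) (a : A) (z : Z) :
    ConvexOn ℝ (subStdSimplex S) (fun b => obsProb M b a z * f (beliefUpdate M b a z)) := by
  refine ((hf.perspective_totalMass.comp_linearMap (jointProb M a z)).subset
    (fun b hb => jointProb_nonneg M hb.1 a z) convex_subStdSimplex).congr fun b _ => ?_
  simp only [Function.comp_apply, beliefUpdate_eq_smul, obsProb_eq_totalMass]

theorem isExtreme_isBadBelief (Bad : Finset S) :
    IsExtreme ℝ (subStdSimplex S) {b ∈ subStdSimplex S | IsBadBelief Bad b} := by
  have h := isExtreme_setOf_eq_of_le (s := subStdSimplex S) (c := 1)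
    (∑ s ∈ Bad, LinearMap.proj s) fun b hb => by
      simp only [LinearMap.coe_sum, LinearMap.coe_proj, Finset.sum_apply, Function.eval]
      exact (Finset.sum_le_sum_of_subset_of_nonneg (Finset.subset_univ Bad)
        fun s _ _ => hb.1 s).trans hb.2
  simpa [IsBadBelief] using h

theorem valN_le_one (M : POMDP S A Z) (Bad : Finset S) (n : ℕ) :
    ∀ b ∈ subStdSimplex S, valN M Bad n b ≤ 1 := by
  induction n with
  | zero => intro b _; simp only [valN]; split_ifs <;> norm_num
  | succ n ih =>
    intro b hb
    simp only [valN]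
    split_ifs
    exacts [le_rfl, Real.iSup_le (fun a => sum_obsProb_mul_le_one M ih hb a) zero_le_one]

theorem convexOn_valN (M : POMDP S A Z) (Bad : Finset S) (n : ℕ) :
    ConvexOn ℝ (subStdSimplex S) (valN M Bad n) := by
  induction n with
  | zero =>
    exact (convexOn_const 0 convex_subStdSimplex).ite_of_isExtreme (isExtreme_isBadBelief Bad)
      fun _ _ => zero_le_one
  | succ n ih =>
    have hstep : ∀ a, ConvexOn ℝ (subStdSimplex S)
        (fun b => ∑ z, obsProb M b a z * valN M Bad n (beliefUpdate M b a z)) := fun a =>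
      ConvexOn.sum _ convex_subStdSimplex fun z _ => ih.obsProb_mul_comp_beliefUpdate M a z
    have hle : ∀ b ∈ subStdSimplex S, ∀ a,
        ∑ z, obsProb M b a z * valN M Bad n (beliefUpdate M b a z) ≤ 1 :=
      fun b hb a => sum_obsProb_mul_le_one M (valN_le_one M Bad n) hb a
    have hsup := ConvexOn.ciSup convex_subStdSimplex hstep fun b hb =>
      ⟨1, Set.forall_mem_range.2 (hle b hb)⟩
    exact hsup.ite_of_isExtreme (isExtreme_isBadBelief Bad) fun b hb =>
      Real.iSup_le (hle b hb) zero_le_one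

theorem convexOn_beliefVal (M : POMDP S A Z) (Bad : Finset S) :
    ConvexOn ℝ (subStdSimplex S) (beliefVal M Bad) :=
  ConvexOn.ciSup convex_subStdSimplex (convexOn_valN M Bad) fun b hb =>
    ⟨1, Set.forall_mem_range.2 fun n => valN_le_one M Bad n b hb⟩

end BeliefMDP

theorem beliefVal_convex_general (M : POMDP S A Z) (Bad : Finset S)
    (b₁ b₂ : S → ℝ) (h₁ : IsBelief M b₁) (h₂ : IsBelief M b₂)
    (α : ℝ) (hα0 : 0 ≤ α) (hα1 : α ≤ 1) :
    beliefVal M Bad (fun s => α * b₁ s + (1 - α) * b₂ s)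
      ≤ α * beliefVal M Bad b₁ + (1 - α) * beliefVal M Bad b₂ :=
  (convexOn_beliefVal M Bad).2 ⟨h₁.1.1, h₁.1.2.le⟩ ⟨h₂.1.1, h₂.1.2.le⟩ hα0 (sub_nonneg.2 hα1)
    (add_sub_cancel α 1)

/-- The value function of the belief MDP of a POMDP is convex:
for beliefs `b₁, b₂` supported on states with the same observation and `α ∈ [0,1]`,
`V(α·b₁ + (1−α)·b₂) ≤ α·V(b₁) + (1−α)·V(b₂)`. -/
theorem beliefVal_convex (M : POMDP S A Z) (Bad : Finset S)
    (b₁ b₂ : S → ℝ) (h₁ : IsBelief M b₁) (h₂ : IsBelief M b₂)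
    (hobs : ∀ s s', b₁ s ≠ 0 → b₂ s' ≠ 0 → M.O s = M.O s')
    (α : ℝ) (hα0 : 0 ≤ α) (hα1 : α ≤ 1) :
    beliefVal M Bad (fun s => α * b₁ s + (1 - α) * b₂ s)
      ≤ α * beliefVal M Bad b₁ + (1 - α) * beliefVal M Bad b₂ :=
  beliefVal_convex_general M Bad b₁ b₂ h₁ h₂ α hα0 hα1
end

section
/- If the underlying MDP of a POMDP is acyclic except for absorbing sink states (i.e., no state is reachable from itself in one or more steps, except for states with only self-loops), then the set of beliefs reachable in the belief MDP from the initial belief is finite. -/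
open BigOperators
open scoped Classical

variable {S A Z : Type} [Fintype S] [Fintype A] [Fintype Z]

/-- A state is absorbing if every enabled action loops back with probability 1. -/
def Absorbing (M : POMDP S A Z) (s : S) : Prop :=
  ∀ a, (∑ s', M.P s a s') = 1 → M.P s a s = 1

/-- One-step reachability in the underlying MDP. -/
def Step (M : POMDP S A Z) (s s' : S) : Prop := ∃ a, 0 < M.P s a s'

/-!
Every state in the support of a successor belief `⟦b|α,z⟧` is reached in one step from a state in
the support of `b`. If `b` has a non-absorbing state in its support, the largest height (number of
non-absorbing states strictly reachable) of a non-absorbing state in the support therefore drops,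
by acyclicity. Otherwise every state in the support is absorbing, so `⟦b|α,z⟧` is `b` conditioned
on a subset of its support, and it differs from `b` only if that subset is proper. Hence the pair
(largest height, size of the support) decreases lexicographically along every transition of the
belief MDP to a different belief; as the belief MDP is finitely branching, only finitely many
beliefs are reachable.
-/

open Relation

theorem Relation.ReflTransGen.and_ne {α : Type*} {r : α → α → Prop} {x y : α}
    (h : ReflTransGen r x y) : ReflTransGen (fun a b => r a b ∧ b ≠ a) x y := by
  rw [← reflTransGen_reflGen]
  refine ReflTransGen.mono (fun a b hab => ?_) _ _ h
  by_cases hba : b = a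
  · exact hba ▸ ReflGen.refl
  · exact ReflGen.single ⟨hab, hba⟩

theorem Relation.finite_setOf_reflTransGen {α β : Type*} [Preorder β] [WellFoundedLT β]
    {r : α → α → Prop} {p : α → Prop} (f : α → β) (hfin : ∀ x, {y | r x y}.Finite)
    (hp : ∀ x y, p x → r x y → p y) (hf : ∀ x y, p x → r x y → y ≠ x → f y < f x)
    {x : α} (hx : p x) : {y | ReflTransGen r x y}.Finite := by
  induction x using (InvImage.wf f wellFounded_lt).induction with
  | _ x ih =>
    have hsub : {y | ReflTransGen r x y} ⊆
        insert x (⋃ y ∈ {y | r x y ∧ y ≠ x}, {z | ReflTransGen r y z}) := by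
      intro z hz
      rcases hz.and_ne.cases_head with rfl | ⟨y, hxy, hyz⟩
      · exact Set.mem_insert _ _
      · exact Or.inr (Set.mem_biUnion hxy (ReflTransGen.mono (fun _ _ h => h.1) _ _ hyz))
    refine (Set.Finite.insert x ?_).subset hsub
    exact ((hfin x).subset fun _ h => h.1).biUnion
      fun y ⟨hxy, hne⟩ => ih y (hf x y hx hxy hne) (hp x y hx hxy)

section Absorbing

variable {M : POMDP S A Z} {s : S}

theorem Absorbing.P_eq_zero_of_ne (hs : Absorbing M s) (a : A) {t : S} (hts : t ≠ s) :
    M.P s a t = 0 := by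
  have hzero : ∀ u ∈ Finset.univ.erase s, M.P s a u = 0 := by
    rw [← Finset.sum_eq_zero_iff_of_nonneg fun u _ => M.P_nonneg s a u]
    have hsplit := Finset.add_sum_erase Finset.univ (M.P s a) (Finset.mem_univ s)
    rcases M.P_sum s a with h0 | h1
    · linarith [Finset.sum_nonneg fun u (_ : u ∈ Finset.univ.erase s) => M.P_nonneg s a u,
        M.P_nonneg s a s]
    · linarith [hs a h1]
  exact hzero t (Finset.mem_erase.mpr ⟨hts, Finset.mem_univ t⟩)

theorem Absorbing.eq_of_step (hs : Absorbing M s) {t : S} (h : Step M s t) : t = s := by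
  obtain ⟨a, ha⟩ := h
  by_contra hts
  exact ha.ne' (hs.P_eq_zero_of_ne a hts)

theorem Absorbing.P_self_eq_one (hs : Absorbing M s) {a : A} (h : M.P s a s ≠ 0) :
    M.P s a s = 1 := by
  refine hs a ((M.P_sum s a).resolve_left fun h0 => h ?_)
  exact (Finset.sum_eq_zero_iff_of_nonneg fun u _ => M.P_nonneg s a u).mp h0 s
    (Finset.mem_univ s)

end Absorbing

noncomputable def height (M : POMDP S A Z) (s : S) : ℕ :=
  (Finset.univ.filter fun t => TransGen (Step M) s t ∧ ¬ Absorbing M t).card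

theorem height_lt_of_step {M : POMDP S A Z}
    (hacyclic : ∀ s, ¬ Absorbing M s → ¬ TransGen (Step M) s s)
    {s t : S} (h : Step M s t) (ht : ¬ Absorbing M t) : height M t < height M s := by
  refine Finset.card_lt_card ⟨fun u hu => ?_, fun hsub => ?_⟩
  · simp only [Finset.mem_filter, Finset.mem_univ, true_and] at hu ⊢
    exact ⟨hu.1.head h, hu.2⟩
  · have : t ∈ Finset.univ.filter fun u => TransGen (Step M) t u ∧ ¬ Absorbing M u :=
      hsub (by simpa using ⟨TransGen.single h, ht⟩)
    exact hacyclic t ht (Finset.mem_filter.mp this).2.1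

theorem isDist_dirac (s : S) : IsDist (dirac s) :=
  ⟨fun t => by unfold dirac; split_ifs <;> norm_num, by simp [dirac]⟩

theorem obsProb_eq_sum (M : POMDP S A Z) (b : S → ℝ) (a : A) (z : Z) :
    obsProb M b a z = ∑ t, if M.O t = z then ∑ s, b s * M.P s a t else 0 := by
  simp only [obsProb, Finset.mul_sum, mul_ite, mul_zero]
  rw [Finset.sum_comm]
  refine Finset.sum_congr rfl fun t _ => ?_
  split_ifs <;> simp

section BeliefUpdate

variable {M : POMDP S A Z} {b : S → ℝ} {a : A} {z : Z}

theorem isDist_beliefUpdate (hb : IsDist b) (hz : 0 < obsProb M b a z) :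
    IsDist (beliefUpdate M b a z) := by
  refine ⟨fun t => div_nonneg ?_ hz.le, ?_⟩
  · split_ifs
    · exact Finset.sum_nonneg fun s _ => mul_nonneg (hb.1 s) (M.P_nonneg s a t)
    · exact le_rfl
  · simp only [beliefUpdate, ← Finset.sum_div, ← obsProb_eq_sum, div_self hz.ne']

theorem exists_step_of_beliefUpdate_ne_zero {t : S} (h : beliefUpdate M b a z t ≠ 0) :
    ∃ s, b s ≠ 0 ∧ Step M s t := by
  have hnum : ∑ s, b s * M.P s a t ≠ 0 := fun h0 => h (by simp [beliefUpdate, h0])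
  obtain ⟨s, -, hs⟩ := Finset.exists_ne_zero_of_sum_ne_zero hnum
  exact ⟨s, left_ne_zero_of_mul hs,
    a, (M.P_nonneg s a t).lt_of_ne (right_ne_zero_of_mul hs).symm⟩

theorem beliefUpdate_apply_of_absorbing (habs : ∀ s, b s ≠ 0 → Absorbing M s) (t : S) :
    beliefUpdate M b a z t =
      (if M.O t = z then b t * M.P t a t else 0) / obsProb M b a z := by
  have hdiag : ∑ s, b s * M.P s a t = b t * M.P t a t := by
    refine Finset.sum_eq_single t (fun s _ hst => ?_) (by simp)
    by_cases hbs : b s = 0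
    · simp [hbs]
    · simp [(habs s hbs).P_eq_zero_of_ne a hst.symm]
  simp only [beliefUpdate, hdiag]

theorem support_beliefUpdate_subset_of_absorbing (habs : ∀ s, b s ≠ 0 → Absorbing M s) :
    Function.support (beliefUpdate M b a z) ⊆ Function.support b := by
  intro t ht hbt
  simp [beliefUpdate_apply_of_absorbing habs, hbt] at ht

theorem beliefUpdate_eq_self_of_support_eq (hb : IsDist b) (hz : 0 < obsProb M b a z)
    (habs : ∀ s, b s ≠ 0 → Absorbing M s)
    (hsupp : Function.support (beliefUpdate M b a z) = Function.support b) :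
    beliefUpdate M b a z = b := by
  set c := obsProb M b a z
  have hmem (t : S) : beliefUpdate M b a z t ≠ 0 ↔ b t ≠ 0 := by
    simpa only [Function.mem_support] using Set.ext_iff.mp hsupp t
  have hdiv : ∀ t, beliefUpdate M b a z t = b t / c := by
    intro t
    by_cases hbt : b t = 0
    · rw [not_not.mp fun h => (hmem t).mp h hbt, hbt, zero_div]
    · have hne := (hmem t).mpr hbt
      rw [beliefUpdate_apply_of_absorbing habs] at hne ⊢
      split_ifs at hne ⊢ with hO
      · rw [(habs t hbt).P_self_eq_one (right_ne_zero_of_mul (div_ne_zero_iff.mp hne).1),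
          mul_one]
      · simp at hne
  have hc : c = 1 := by
    have hsum := (isDist_beliefUpdate hb hz).2
    simp only [hdiv, ← Finset.sum_div, hb.2] at hsum
    simpa using hsum
  funext t
  rw [hdiv, hc, div_one]

end BeliefUpdate

noncomputable def level (M : POMDP S A Z) (b : S → ℝ) : ℕ :=
  (Finset.univ.filter fun s => b s ≠ 0 ∧ ¬ Absorbing M s).sup fun s => height M s + 1

theorem level_beliefUpdate_lt {M : POMDP S A Z}
    (hacyclic : ∀ s, ¬ Absorbing M s → ¬ TransGen (Step M) s s)
    {b : S → ℝ} {a : A} {z : Z} {s₀ : S} (hs₀ : b s₀ ≠ 0) (hs₀na : ¬ Absorbing M s₀) :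
    level M (beliefUpdate M b a z) < level M b := by
  have hle : ∀ {s}, b s ≠ 0 → ¬ Absorbing M s → height M s + 1 ≤ level M b := fun hbs hs =>
    Finset.le_sup (f := fun s => height M s + 1) (by simp [hbs, hs])
  refine (Finset.sup_lt_iff (lt_of_lt_of_le (Nat.succ_pos _) (hle hs₀ hs₀na))).mpr ?_
  intro t ht
  simp only [Finset.mem_filter, Finset.mem_univ, true_and] at ht
  obtain ⟨s, hbs, hst⟩ := exists_step_of_beliefUpdate_ne_zero ht.1
  have hs : ¬ Absorbing M s := fun habs => ht.2 (habs.eq_of_step hst ▸ habs)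
  have hts := height_lt_of_step hacyclic hst ht.2
  have hsb := hle hbs hs
  omega

theorem level_eq_zero {M : POMDP S A Z} {b : S → ℝ} (habs : ∀ s, b s ≠ 0 → Absorbing M s) :
    level M b = 0 := by
  refine Nat.eq_zero_of_le_zero (Finset.sup_le fun s hs => ?_)
  simp only [Finset.mem_filter, Finset.mem_univ, true_and] at hs
  exact absurd (habs s hs.1) hs.2

noncomputable def potential (M : POMDP S A Z) (b : S → ℝ) : ℕ ×ₗ ℕ :=
  toLex (level M b, (Function.support b).ncard)

theorem potential_beliefUpdate_lt {M : POMDP S A Z}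
    (hacyclic : ∀ s, ¬ Absorbing M s → ¬ TransGen (Step M) s s)
    {b : S → ℝ} {a : A} {z : Z} (hb : IsDist b) (hz : 0 < obsProb M b a z)
    (hne : beliefUpdate M b a z ≠ b) :
    potential M (beliefUpdate M b a z) < potential M b := by
  rw [potential, potential, Prod.Lex.toLex_lt_toLex]
  by_cases hna : ∃ s, b s ≠ 0 ∧ ¬ Absorbing M s
  · obtain ⟨s₀, hs₀, hs₀na⟩ := hna
    exact Or.inl (level_beliefUpdate_lt hacyclic hs₀ hs₀na)
  · push Not at hna
    have hsub := support_beliefUpdate_subset_of_absorbing (a := a) (z := z) hna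
    refine Or.inr ⟨?_, Set.ncard_lt_ncard (hsub.ssubset_of_ne fun hsupp => hne ?_)⟩
    · rw [level_eq_zero hna, level_eq_zero fun s hs => hna s (hsub hs)]
    · exact beliefUpdate_eq_self_of_support_eq hb hz hna hsupp

theorem exists_of_beliefTrans_pos {M : POMDP S A Z} {b b' : S → ℝ} {a : A}
    (h : 0 < beliefTrans M b a b') :
    ∃ z, 0 < obsProb M b a z ∧ b' = beliefUpdate M b a z := by
  obtain ⟨z, -, hz⟩ := Finset.exists_ne_zero_of_sum_ne_zero h.ne'
  split_ifs at hz with hc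
  · exact ⟨z, hc.2, hc.1⟩
  · exact absurd rfl hz

/-- if the underlying MDP is acyclic except for absorbing sink states
(no non-absorbing state is reachable from itself in one or more steps), then the set
of beliefs reachable in the belief MDP from the initial belief is finite. -/
theorem reach_finite_of_acyclic (M : POMDP S A Z)
    (hacyclic : ∀ s, ¬ Absorbing M s → ¬ Relation.TransGen (Step M) s s) :
    {b' : S → ℝ |
      Relation.ReflTransGen (fun x y => ∃ a, 0 < beliefTrans M x a y)
        (dirac M.init) b'}.Finite := by
  refine Relation.finite_setOf_reflTransGen (p := IsDist) (potential M) (fun b => ?_)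
    (fun b b' hb ⟨a, ha⟩ => ?_) (fun b b' hb ⟨a, ha⟩ hne => ?_) (isDist_dirac M.init)
  · refine (Set.finite_range fun p : A × Z => beliefUpdate M b p.1 p.2).subset ?_
    rintro b' ⟨a, ha⟩
    obtain ⟨z, -, rfl⟩ := exists_of_beliefTrans_pos ha
    exact ⟨(a, z), rfl⟩
  · obtain ⟨z, hz, rfl⟩ := exists_of_beliefTrans_pos ha
    exact isDist_beliefUpdate hb hz
  · obtain ⟨z, hz, rfl⟩ := exists_of_beliefTrans_pos ha
    exact potential_beliefUpdate_lt hacyclic hb hz hne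
end
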